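/- In an implicative algebra, the implicative disjunction a + b satisfies introduction and elimination up to the separator: there exist j1, j2 ∈ Σ with j1 ≤ ⋀_{a,b}(a → a+b), j2 ≤ ⋀_{a,b}(b → a+b), and for every c ∈ A, (a+b) ≤ ((a→c) → ((b→c) → c)). -/

import Mathlib

universe u v

/-- An implicative algebra: a complete lattice with an implication antitone in the
first argument, monotone in the second, distributing over arbitrary meets in the
second argument, together with a separator `Sep` which is upward closed, closed
under modus ponens, and contains the combinators K and S. -/
structure ImplicativeAlgebra (A : Type u) [CompleteLattice A] where
  imp : A → A → A
  imp_anti : ∀ ⦃a a' b : A⦄, a ≤ a' → imp a' b ≤ imp a b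
  imp_mono : ∀ ⦃a b b' : A⦄, b ≤ b' → imp a b ≤ imp a b'
  imp_sInf : ∀ (a : A) (S : Set A), imp a (sInf S) = ⨅ b ∈ S, imp a b
  Sep : Set A
  sep_upward : ∀ ⦃a b : A⦄, a ∈ Sep → a ≤ b → b ∈ Sep
  sep_mp : ∀ ⦃a b : A⦄, imp a b ∈ Sep → a ∈ Sep → b ∈ Sep
  sep_K : (⨅ a : A, ⨅ b : A, imp a (imp b a)) ∈ Sep
  sep_S : (⨅ a : A, ⨅ b : A, ⨅ c : A,
      imp (imp a (imp b c)) (imp (imp a b) (imp a c))) ∈ Sep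

namespace ImplicativeAlgebra

variable {A : Type u} [CompleteLattice A] (𝔸 : ImplicativeAlgebra A)

/-- Application: `a · b := ⋀ {x | a ≤ b → x}`. -/
def app (a b : A) : A := sInf {x : A | a ≤ 𝔸.imp b x}

/-- Implicative conjunction `a × b`. -/
def itimes (a b : A) : A := ⨅ x : A, 𝔸.imp (𝔸.imp a (𝔸.imp b x)) x

/-- Implicative disjunction `a + b`. -/
def iplus (a b : A) : A := ⨅ x : A, 𝔸.imp (𝔸.imp a x) (𝔸.imp (𝔸.imp b x) x)

/-- Second-order encoding of the existential quantifier. -/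
def iexists {ι : Sort v} (f : ι → A) : A := ⨅ x : A, 𝔸.imp (⨅ i, 𝔸.imp (f i) x) x

/-- Encoding of k = λx.λy.x. -/
def kComb : A := ⨅ a : A, 𝔸.imp a (⨅ b : A, 𝔸.imp b a)

/-- Encoding of λx.λy.y. -/
def kbarComb : A := ⨅ a : A, 𝔸.imp a (⨅ b : A, 𝔸.imp b b)

/-- Encoding of the pairing combinator p = λx.λy.λz.zxy. -/
def pComb : A := ⨅ a : A, 𝔸.imp a (⨅ b : A, 𝔸.imp b (⨅ c : A, 𝔸.imp c (𝔸.app (𝔸.app c a) b)))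

/-- Encoding of the first projection p₁ = λu.u k. -/
def p1Comb : A := ⨅ u : A, 𝔸.imp u (𝔸.app u 𝔸.kComb)

/-- Encoding of the second projection p₂ = λv.v k̄. -/
def p2Comb : A := ⨅ u : A, 𝔸.imp u (𝔸.app u 𝔸.kbarComb)

/-- Encoding of the existential-introduction combinator e = λx.λz.zx. -/
def eComb : A := ⨅ a : A, 𝔸.imp a (⨅ c : A, 𝔸.imp c (𝔸.app c a))

end ImplicativeAlgebra

/-!
The elimination rule for `a + b` is just one instance of the meet defining it. The injections
`j₁ = λx.λz.λw.zx` and `j₂ = λx.λz.λw.wx` are written with S and K as `B (B K) e` and `B K e`,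
where `B = S (K S) K` is composition and `e = S (K (S I)) K` is `λx.λz.zx`; every typing they
need follows from the rule "if `f ≤ x → y` and `g ≤ x` then `f g ≤ y`".
-/

namespace ImplicativeAlgebra

variable {A : Type u} [CompleteLattice A] (𝔸 : ImplicativeAlgebra A)

lemma app_le {f g x y : A} (hf : f ≤ 𝔸.imp x y) (hg : g ≤ x) : 𝔸.app f g ≤ y :=
  sInf_le (hf.trans (𝔸.imp_anti hg))

lemma le_imp_app (a b : A) : a ≤ 𝔸.imp b (𝔸.app a b) := by
  rw [app, 𝔸.imp_sInf]
  exact le_iInf₂ fun _ hx => hx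

lemma app_mem_sep {a b : A} (ha : a ∈ 𝔸.Sep) (hb : b ∈ 𝔸.Sep) : 𝔸.app a b ∈ 𝔸.Sep :=
  𝔸.sep_mp (𝔸.sep_upward ha (𝔸.le_imp_app a b)) hb

lemma le_imp_iInf {ι : Sort v} {s a : A} {f : ι → A} (h : ∀ i, s ≤ 𝔸.imp a (f i)) :
    s ≤ 𝔸.imp a (⨅ i, f i) := by
  rw [← sInf_range, 𝔸.imp_sInf]
  exact le_iInf₂ fun _ ⟨i, hi⟩ => hi ▸ h i

lemma kComb_le (a b : A) : 𝔸.kComb ≤ 𝔸.imp a (𝔸.imp b a) :=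
  (iInf_le _ a).trans (𝔸.imp_mono (iInf_le _ b))

lemma kComb_mem_sep : 𝔸.kComb ∈ 𝔸.Sep :=
  𝔸.sep_upward 𝔸.sep_K
    (le_iInf fun a => 𝔸.le_imp_iInf fun b => (iInf_le _ a).trans (iInf_le _ b))

def sComb : A :=
  ⨅ a : A, ⨅ b : A, ⨅ c : A, 𝔸.imp (𝔸.imp a (𝔸.imp b c)) (𝔸.imp (𝔸.imp a b) (𝔸.imp a c))

lemma sComb_le (a b c : A) :
    𝔸.sComb ≤ 𝔸.imp (𝔸.imp a (𝔸.imp b c)) (𝔸.imp (𝔸.imp a b) (𝔸.imp a c)) :=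
  (iInf_le _ a).trans ((iInf_le _ b).trans (iInf_le _ c))

lemma sComb_mem_sep : 𝔸.sComb ∈ 𝔸.Sep := 𝔸.sep_S

def iComb : A := 𝔸.app (𝔸.app 𝔸.sComb 𝔸.kComb) 𝔸.kComb

lemma iComb_le (a : A) : 𝔸.iComb ≤ 𝔸.imp a a :=
  𝔸.app_le (𝔸.app_le (𝔸.sComb_le a (𝔸.imp a a) a) (𝔸.kComb_le a (𝔸.imp a a)))
    (𝔸.kComb_le a a)

lemma iComb_mem_sep : 𝔸.iComb ∈ 𝔸.Sep :=
  𝔸.app_mem_sep (𝔸.app_mem_sep 𝔸.sComb_mem_sep 𝔸.kComb_mem_sep) 𝔸.kComb_mem_sep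

def bComb : A := 𝔸.app (𝔸.app 𝔸.sComb (𝔸.app 𝔸.kComb 𝔸.sComb)) 𝔸.kComb

lemma app_bComb_le {f y z : A} (hf : f ≤ 𝔸.imp y z) (x : A) :
    𝔸.app 𝔸.bComb f ≤ 𝔸.imp (𝔸.imp x y) (𝔸.imp x z) := by
  set P := 𝔸.imp y z
  have hKS : 𝔸.app 𝔸.kComb 𝔸.sComb ≤
      𝔸.imp P (𝔸.imp (𝔸.imp x P) (𝔸.imp (𝔸.imp x y) (𝔸.imp x z))) :=
    𝔸.app_le (𝔸.kComb_le _ P) (𝔸.sComb_le x y z)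
  have hSKS : 𝔸.app 𝔸.sComb (𝔸.app 𝔸.kComb 𝔸.sComb) ≤
      𝔸.imp (𝔸.imp P (𝔸.imp x P)) (𝔸.imp P (𝔸.imp (𝔸.imp x y) (𝔸.imp x z))) :=
    𝔸.app_le (𝔸.sComb_le P (𝔸.imp x P) _) hKS
  exact 𝔸.app_le (𝔸.app_le hSKS (𝔸.kComb_le P x)) hf

lemma bComb_mem_sep : 𝔸.bComb ∈ 𝔸.Sep :=
  𝔸.app_mem_sep
    (𝔸.app_mem_sep 𝔸.sComb_mem_sep (𝔸.app_mem_sep 𝔸.kComb_mem_sep 𝔸.sComb_mem_sep))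
    𝔸.kComb_mem_sep

lemma eComb_le (a x : A) : 𝔸.eComb ≤ 𝔸.imp a (𝔸.imp (𝔸.imp a x) x) :=
  (iInf_le _ a).trans (𝔸.imp_mono ((iInf_le _ (𝔸.imp a x)).trans
    (𝔸.imp_mono (𝔸.app_le le_rfl le_rfl))))

lemma sk_le_eComb :
    𝔸.app (𝔸.app 𝔸.sComb (𝔸.app 𝔸.kComb (𝔸.app 𝔸.sComb 𝔸.iComb))) 𝔸.kComb ≤ 𝔸.eComb := by
  refine le_iInf fun a => 𝔸.le_imp_iInf fun c => ?_
  set D := 𝔸.imp c (𝔸.app c a)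
  have hI : 𝔸.iComb ≤ 𝔸.imp c (𝔸.imp a (𝔸.app c a)) :=
    (𝔸.iComb_le c).trans (𝔸.imp_mono (𝔸.le_imp_app c a))
  have hSI : 𝔸.app 𝔸.sComb 𝔸.iComb ≤ 𝔸.imp (𝔸.imp c a) D :=
    𝔸.app_le (𝔸.sComb_le c a _) hI
  have hKSI : 𝔸.app 𝔸.kComb (𝔸.app 𝔸.sComb 𝔸.iComb) ≤ 𝔸.imp a (𝔸.imp (𝔸.imp c a) D) :=
    𝔸.app_le (𝔸.kComb_le _ a) hSI
  exact 𝔸.app_le (𝔸.app_le (𝔸.sComb_le a (𝔸.imp c a) D) hKSI) (𝔸.kComb_le a c)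

lemma eComb_mem_sep : 𝔸.eComb ∈ 𝔸.Sep := by
  have hS := 𝔸.sComb_mem_sep
  have hK := 𝔸.kComb_mem_sep
  exact 𝔸.sep_upward (𝔸.app_mem_sep (𝔸.app_mem_sep hS (𝔸.app_mem_sep hK
    (𝔸.app_mem_sep hS 𝔸.iComb_mem_sep))) hK) 𝔸.sk_le_eComb

/-- The paper's `j₁ = λx.λz.λw.zx`. -/
def inlComb : A := 𝔸.app (𝔸.app 𝔸.bComb (𝔸.app 𝔸.bComb 𝔸.kComb)) 𝔸.eComb

/-- The paper's `j₂ = λx.λz.λw.wx`. -/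
def inrComb : A := 𝔸.app (𝔸.app 𝔸.bComb 𝔸.kComb) 𝔸.eComb

lemma inlComb_mem_sep : 𝔸.inlComb ∈ 𝔸.Sep :=
  𝔸.app_mem_sep (𝔸.app_mem_sep 𝔸.bComb_mem_sep
    (𝔸.app_mem_sep 𝔸.bComb_mem_sep 𝔸.kComb_mem_sep)) 𝔸.eComb_mem_sep

lemma inrComb_mem_sep : 𝔸.inrComb ∈ 𝔸.Sep :=
  𝔸.app_mem_sep (𝔸.app_mem_sep 𝔸.bComb_mem_sep 𝔸.kComb_mem_sep) 𝔸.eComb_mem_sep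

lemma inlComb_le (a b : A) : 𝔸.inlComb ≤ 𝔸.imp a (𝔸.iplus a b) := by
  refine 𝔸.le_imp_iInf fun c => ?_
  have hBK := 𝔸.app_bComb_le (𝔸.kComb_le c (𝔸.imp b c)) (𝔸.imp a c)
  exact 𝔸.app_le (𝔸.app_bComb_le hBK a) (𝔸.eComb_le a c)

lemma inrComb_le (a b : A) : 𝔸.inrComb ≤ 𝔸.imp b (𝔸.iplus a b) := by
  refine 𝔸.le_imp_iInf fun c => ?_
  have hBK := 𝔸.app_bComb_le (𝔸.kComb_le (𝔸.imp (𝔸.imp b c) c) (𝔸.imp a c)) b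
  exact 𝔸.app_le hBK (𝔸.eComb_le b c)

lemma iplus_le (a b c : A) : 𝔸.iplus a b ≤ 𝔸.imp (𝔸.imp a c) (𝔸.imp (𝔸.imp b c) c) :=
  iInf_le _ c

end ImplicativeAlgebra

/-- implicative disjunction satisfies introduction and elimination
up to the separator. -/
theorem iplus_intro_elim {A : Type u} [CompleteLattice A]
    (𝔸 : ImplicativeAlgebra A) :
    ∃ j1 ∈ 𝔸.Sep, ∃ j2 ∈ 𝔸.Sep,
      j1 ≤ (⨅ a : A, ⨅ b : A, 𝔸.imp a (𝔸.iplus a b)) ∧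
      j2 ≤ (⨅ a : A, ⨅ b : A, 𝔸.imp b (𝔸.iplus a b)) ∧
      ∀ a b c : A, 𝔸.iplus a b ≤ 𝔸.imp (𝔸.imp a c) (𝔸.imp (𝔸.imp b c) c) :=
  ⟨𝔸.inlComb, 𝔸.inlComb_mem_sep, 𝔸.inrComb, 𝔸.inrComb_mem_sep,
    le_iInf₂ 𝔸.inlComb_le, le_iInf₂ 𝔸.inrComb_le, 𝔸.iplus_le⟩
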